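/- The ℚ-linear map from ℋ^+ ⊗_ℚ ℚ[X] to ℋ sending h ⊗ X^k to h * b^{*k} (where b^{*k} denotes the k-fold shuffle power of the one-letter word b) is a vector-space isomorphism; equivalently, ℋ is the direct sum over k ≥ 0 of the subspaces ℋ^+ * b^{*k}. -/

import Mathlib

inductive Letter | a | b
deriving DecidableEq

abbrev Word := List Letter

/-- The algebra `ℋ`: formal `ℚ`-linear combinations of words. -/
abbrev H := Word →₀ ℚ

/-- The list of shuffles of two words (with multiplicity). -/
def shuffleList : Word → Word → List Word
  | [], v => [v]
  | u, [] => [u]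
  | x :: u, y :: v =>
      ((shuffleList u (y :: v)).map fun t => x :: t) ++
      ((shuffleList (x :: u) v).map fun t => y :: t)
termination_by u v => u.length + v.length
decreasing_by all_goals simp

/-- The shuffle product `u * v` of two words, as an element of `ℋ`. -/
noncomputable def shW (u v : Word) : H :=
  ((shuffleList u v).map fun t => Finsupp.single t (1 : ℚ)).sum

/-- The shuffle product of a word with an element of `ℋ`, extended linearly. -/
noncomputable def shWH (u : Word) (g : H) : H := g.sum fun v cv => cv • shW u v

/-- Concatenation of a word with an element of `ℋ`, extended linearly. -/
noncomputable def concatWH (u : Word) (g : H) : H :=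
  g.sum fun v c => Finsupp.single (u ++ v) c

/-- The list of all words of length `m`. -/
def wordsOfLength : ℕ → List Word
  | 0 => [[]]
  | n + 1 =>
      ((wordsOfLength n).map fun t => Letter.a :: t) ++
      ((wordsOfLength n).map fun t => Letter.b :: t)

/-- `(a+b)^m`, the `m`-fold concatenation power of `a+b` expanded multilinearly:
the sum of all words of length `m`. -/
noncomputable def abPow (m : ℕ) : H :=
  ((wordsOfLength m).map fun t => Finsupp.single t (1 : ℚ)).sum

/-- `(b-a)^m`, the `m`-fold concatenation power of `b-a` expanded multilinearly:
the signed sum of all words of length `m`. -/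
noncomputable def bmaPow (m : ℕ) : H :=
  ((wordsOfLength m).map fun t =>
    Finsupp.single t ((-1 : ℚ) ^ t.count Letter.a)).sum

/-- `W⁺` : words not beginning with `b`. -/
def WPlus (w : Word) : Prop := w.head? ≠ some Letter.b

/-- The shuffle product on `ℋ`, extended bilinearly from words. -/
noncomputable def shH (f g : H) : H :=
  f.sum fun u cu => g.sum fun v cv => (cu * cv) • shW u v

/-- `h^{*k}` : the `k`-fold shuffle power of `h ∈ ℋ`. -/
noncomputable def shPow (h : H) : ℕ → H
  | 0 => Finsupp.single [] 1
  | n + 1 => shH (shPow h n) h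

/-- The subspace `ℋ⁺ * b^{*k}` of `ℋ`: the span of the shuffle products of the
basis words of `ℋ⁺` with the `k`-th shuffle power of the one-letter word `b`. -/
noncomputable def SHb (k : ℕ) : Submodule ℚ H :=
  Submodule.span ℚ
    {x : H | ∃ w : Word, WPlus w ∧
      x = shH (Finsupp.single w 1) (shPow (Finsupp.single [Letter.b] 1) k)}


/-!
Identify `ℋ⁺ ⊗ ℚ[X]` with `ℋ` via `u ⊗ X^k ↦ b^k u`. Since `b^{*k} = k! b^k` and `u ∈ W⁺` does
not start with `b`, the word `b^k u` is the only shuffle of `u` with `b^k` beginning with `k`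
letters `b`.
So the map `b^k u ↦ u * b^{*k}` is `k!` times the identity modulo words with fewer leading `b`'s:
it is triangular with nonzero diagonal, hence bijective, and it carries the decomposition of `ℋ`
by the number of leading `b`'s onto the family `ℋ⁺ * b^{*k}`.
-/

open Finsupp

section Triangular

variable {ι σ K : Type*} [LinearOrder σ] [Field K]
  {f : (ι →₀ K) →ₗ[K] (ι →₀ K)} {deg : ι → σ} {c : ι → K}

theorem Finsupp.apply_single_one_apply_of_triangular
    (hf : ∀ i, f (single i 1) - c i • single i 1 ∈ supported K K {j | deg j < deg i})
    {i j : ι} (hij : deg i ≤ deg j) :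
    f (single i 1) j = c i * single i 1 j := by
  have h := (mem_supported' K _).1 (hf i) j (by simpa using hij)
  rwa [sub_apply, smul_apply, smul_eq_mul, sub_eq_zero] at h

theorem Finsupp.injective_of_triangular (hc : ∀ i, c i ≠ 0)
    (hf : ∀ i, f (single i 1) - c i • single i 1 ∈ supported K K {j | deg j < deg i}) :
    Function.Injective f := by
  refine (injective_iff_map_eq_zero f).2 fun x hx => ?_
  by_contra hne
  obtain ⟨w, hw, hmax⟩ := x.support.exists_max_image deg (support_nonempty_iff.2 hne)
  -- at an index of maximal degree in the support only the diagonal term contributes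
  have hcoeff : f x w = x w * c w := by
    have hsmul : ∀ v, f (single v (x v)) w = x v * f (single v 1) w := fun v => by
      rw [← smul_single_one, map_smul, smul_apply, smul_eq_mul]
    conv_lhs => rw [← x.sum_single]
    simp_rw [Finsupp.sum, map_sum, coe_finsetSum, Finset.sum_apply, hsmul]
    rw [Finset.sum_eq_single w]
    · rw [apply_single_one_apply_of_triangular hf le_rfl, single_eq_same, mul_one]
    · intro v hv hvw
      rw [apply_single_one_apply_of_triangular hf (hmax v hv), single_eq_of_ne hvw.symm,
        mul_zero, mul_zero]
    · exact fun hw' => absurd hw hw'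
  rw [hx, zero_apply, eq_comm] at hcoeff
  exact mul_ne_zero (mem_support_iff.1 hw) (hc w) hcoeff

theorem Finsupp.surjective_of_triangular [WellFoundedLT σ] (hc : ∀ i, c i ≠ 0)
    (hf : ∀ i, f (single i 1) - c i • single i 1 ∈ supported K K {j | deg j < deg i}) :
    Function.Surjective f := by
  have hsingle : ∀ s i, deg i = s → single i (1 : K) ∈ LinearMap.range f := by
    intro s
    induction s using WellFoundedLT.induction with
    | ind s ih =>
      rintro i rfl
      have hlower : supported K K {j | deg j < deg i} ≤ LinearMap.range f := by
        rw [supported_eq_span_single, Submodule.span_le]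
        rintro _ ⟨j, hj, rfl⟩
        exact ih _ hj j rfl
      have hdiag : c i • single i (1 : K) ∈ LinearMap.range f := by
        simpa only [sub_sub_cancel] using
          Submodule.sub_mem _ (LinearMap.mem_range_self f (single i 1)) (hlower (hf i))
      simpa [smul_smul, inv_mul_cancel₀ (hc i)] using
        Submodule.smul_mem _ (c i)⁻¹ hdiag
  rw [← LinearMap.range_eq_top, eq_top_iff, ← supported_univ, supported_eq_span_single,
    Submodule.span_le]
  rintro _ ⟨i, -, rfl⟩
  exact hsingle _ i rfl

end Triangular

theorem Finsupp.isInternal_supported_fiber {ι κ R : Type*} [DecidableEq κ] [Ring R]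
    (p : ι → κ) :
    DirectSum.IsInternal fun k => supported R R {i | p i = k} := by
  rw [DirectSum.isInternal_submodule_iff_iSupIndep_and_iSup_eq_top]
  constructor
  · intro k
    refine Disjoint.mono_right ?_ (disjoint_supported_supported
      (s := {i | p i = k}) (t := {i | p i ≠ k}) (Set.disjoint_left.2 fun _ h h' => h' h))
    refine iSup₂_le fun j hj => supported_mono ?_
    rintro i rfl
    exact hj
  · rw [← supported_iUnion, ← supported_univ]
    congr 1
    ext i
    simp

theorem DirectSum.IsInternal.map_of_bijective {ι R M N : Type*} [DecidableEq ι] [Ring R]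
    [AddCommGroup M] [Module R M] [AddCommGroup N] [Module R N] {A : ι → Submodule R M}
    (h : DirectSum.IsInternal A) {f : M →ₗ[R] N} (hf : Function.Bijective f) :
    DirectSum.IsInternal fun i => (A i).map f := by
  rw [DirectSum.isInternal_submodule_iff_iSupIndep_and_iSup_eq_top] at h ⊢
  refine ⟨h.1.map_orderIso (Submodule.orderIsoMapComapOfBijective f hf), ?_⟩
  rw [← Submodule.map_iSup, h.2, Submodule.map_top, LinearMap.range_eq_top.2 hf.2]

abbrev bWord (k : ℕ) : Word := List.replicate k Letter.b

def leadingBs : Word → ℕ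
  | Letter.b :: w => leadingBs w + 1
  | _ => 0

def dropLeadingBs : Word → Word
  | Letter.b :: w => dropLeadingBs w
  | w => w

theorem bWord_leadingBs_append_dropLeadingBs : ∀ w : Word,
    bWord (leadingBs w) ++ dropLeadingBs w = w
  | [] | Letter.a :: _ => rfl
  | Letter.b :: w => congrArg (Letter.b :: ·) (bWord_leadingBs_append_dropLeadingBs w)

theorem wPlus_dropLeadingBs : ∀ w : Word, WPlus (dropLeadingBs w)
  | [] | Letter.a :: _ => by simp [dropLeadingBs, WPlus]
  | Letter.b :: w => wPlus_dropLeadingBs w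

theorem leadingBs_bWord_append (k : ℕ) {u : Word} (hu : WPlus u) :
    leadingBs (bWord k ++ u) = k := by
  induction k with
  | zero =>
    match u, hu with
    | [], _ | Letter.a :: _, _ => rfl
    | Letter.b :: _, hu => simp [WPlus] at hu
  | succ k ih => simp only [bWord, List.replicate_succ, List.cons_append, leadingBs, ih]

theorem dropLeadingBs_bWord_append (k : ℕ) {u : Word} (hu : WPlus u) :
    dropLeadingBs (bWord k ++ u) = u := by
  induction k with
  | zero =>
    match u, hu with
    | [], _ | Letter.a :: _, _ => rfl
    | Letter.b :: _, hu => simp [WPlus] at hu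
  | succ k ih => simp only [bWord, List.replicate_succ, List.cons_append, dropLeadingBs, ih]

noncomputable def lcons (c : Letter) : H →ₗ[ℚ] H := lmapDomain ℚ ℚ (c :: ·)

@[simp] theorem lcons_single (c : Letter) (t : Word) (x : ℚ) :
    lcons c (single t x) = single (c :: t) x := mapDomain_single

theorem lcons_mem_supported {c : Letter} {s t : Set Word} {x : H}
    (hx : x ∈ supported ℚ ℚ s) (hst : ∀ w ∈ s, c :: w ∈ t) :
    lcons c x ∈ supported ℚ ℚ t := by
  have h := Submodule.mem_map_of_mem (f := lcons c) hx
  rw [lcons, lmapDomain_supported] at h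
  exact supported_mono (by rintro _ ⟨w, hw, rfl⟩; exact hst w hw) h

theorem shW_nil_left (v : Word) : shW [] v = single v 1 := by
  simp [shW, shuffleList]

theorem shW_nil_right (u : Word) : shW u [] = single u 1 := by
  cases u <;> simp [shW, shuffleList]

theorem shW_cons_cons (x y : Letter) (u v : Word) :
    shW (x :: u) (y :: v) = lcons x (shW u (y :: v)) + lcons y (shW (x :: u) v) := by
  rw [shW, shuffleList, List.map_append, List.sum_append]
  congr 1 <;> simp [shW, map_list_sum, List.map_map, Function.comp_def]

theorem shH_single_single (u v : Word) (c d : ℚ) :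
    shH (single u c) (single v d) = (c * d) • shW u v := by
  simp [shH]

theorem shuffleList_bWord_b (k : ℕ) :
    shuffleList (bWord k) [Letter.b] = List.replicate (k + 1) (bWord (k + 1)) := by
  induction k with
  | zero => simp [shuffleList]
  | succ k ih =>
    rw [bWord, List.replicate_succ, shuffleList, ← bWord, ih]
    simp [shuffleList, List.map_replicate, List.replicate_succ, ← List.replicate_succ']

theorem shPow_single_b (k : ℕ) :
    shPow (single [Letter.b] 1) k = (k.factorial : ℚ) • single (bWord k) 1 := by
  induction k with
  | zero => simp [shPow]
  | succ k ih =>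
    have hshW : shW (bWord k) [Letter.b] = ((k : ℚ) + 1) • single (bWord (k + 1)) 1 := by
      simp [shW, shuffleList_bWord_b, List.map_replicate, ← Nat.cast_smul_eq_nsmul ℚ]
    rw [shPow, ih, smul_single_one, shH_single_single, hshW, smul_smul, Nat.factorial_succ]
    push_cast
    ring_nf

theorem shW_bWord_sub_mem_supported (k : ℕ) {u : Word} (hu : WPlus u) :
    shW u (bWord k) - single (bWord k ++ u) 1 ∈ supported ℚ ℚ {v | leadingBs v < k} := by
  induction k generalizing u with
  | zero => simp [shW_nil_right]
  | succ k ih =>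
    match u, hu with
    | [], _ => simp [shW_nil_left]
    | Letter.b :: _, hu => simp [WPlus] at hu
    | Letter.a :: u, hu =>
      have hsplit :
          shW (Letter.a :: u) (bWord (k + 1)) - single (bWord (k + 1) ++ Letter.a :: u) 1 =
            lcons Letter.a (shW u (bWord (k + 1))) +
              lcons Letter.b
                (shW (Letter.a :: u) (bWord k) - single (bWord k ++ Letter.a :: u) 1) := by
        rw [bWord, List.replicate_succ, shW_cons_cons, map_sub, lcons_single]
        abel
      rw [hsplit]
      refine Submodule.add_mem _ (lcons_mem_supported (s := Set.univ) (by simp)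
        fun w _ => by simp [leadingBs]) (lcons_mem_supported (ih hu) fun w hw => ?_)
      simpa [leadingBs] using hw

/-- Under the identification `ℋ⁺ ⊗ ℚ[X] ≅ ℋ`, `u ⊗ X^k ↦ b^k u` (for `u ∈ W⁺`), this is the
map `h ⊗ X^k ↦ h * b^{*k}` of the theorem. -/
noncomputable def bShuffleMap : H →ₗ[ℚ] H :=
  linearCombination ℚ fun w =>
    shH (single (dropLeadingBs w) 1) (shPow (single [Letter.b] 1) (leadingBs w))

theorem bShuffleMap_single (w : Word) :
    bShuffleMap (single w 1) =
      shH (single (dropLeadingBs w) 1) (shPow (single [Letter.b] 1) (leadingBs w)) := by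
  rw [bShuffleMap, linearCombination_single, one_smul]

theorem bShuffleMap_single_eq_smul_shW (w : Word) :
    bShuffleMap (single w 1) =
      ((leadingBs w).factorial : ℚ) • shW (dropLeadingBs w) (bWord (leadingBs w)) := by
  rw [bShuffleMap_single, shPow_single_b, smul_single_one, shH_single_single, one_mul]

theorem bShuffleMap_single_sub_mem_supported (w : Word) :
    bShuffleMap (single w 1) - ((leadingBs w).factorial : ℚ) • single w 1 ∈
      supported ℚ ℚ {v | leadingBs v < leadingBs w} := by
  have h := shW_bWord_sub_mem_supported (leadingBs w) (wPlus_dropLeadingBs w)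
  rw [bWord_leadingBs_append_dropLeadingBs] at h
  rw [bShuffleMap_single_eq_smul_shW, ← smul_sub]
  exact Submodule.smul_mem _ _ h

theorem bShuffleMap_bijective : Function.Bijective bShuffleMap := by
  have hc : ∀ w : Word, ((leadingBs w).factorial : ℚ) ≠ 0 := fun w => by positivity
  exact ⟨injective_of_triangular hc bShuffleMap_single_sub_mem_supported,
    surjective_of_triangular hc bShuffleMap_single_sub_mem_supported⟩

theorem SHb_eq_map_bShuffleMap (k : ℕ) :
    SHb k = (supported ℚ ℚ {w | leadingBs w = k}).map bShuffleMap := by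
  rw [supported_eq_span_single, Submodule.map_span, SHb, ← Set.image_comp]
  congr 1
  ext x
  constructor
  · rintro ⟨u, hu, rfl⟩
    refine ⟨bWord k ++ u, leadingBs_bWord_append k hu, ?_⟩
    rw [Function.comp_apply, bShuffleMap_single, leadingBs_bWord_append k hu,
      dropLeadingBs_bWord_append k hu]
  · rintro ⟨w, rfl, rfl⟩
    exact ⟨dropLeadingBs w, wPlus_dropLeadingBs w, bShuffleMap_single w⟩

/-- `ℋ` is the direct sum over `k ≥ 0` of the subspaces `ℋ⁺ * b^{*k}`; equivalently,
the map `ℋ⁺ ⊗ ℚ[X] → ℋ`, `h ⊗ X^k ↦ h * b^{*k}`, is a vector-space isomorphism. -/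
theorem statement10 : DirectSum.IsInternal fun k : ℕ => SHb k := by
  simpa only [SHb_eq_map_bShuffleMap] using
    (isInternal_supported_fiber (R := ℚ) leadingBs).map_of_bijective bShuffleMap_bijective
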